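/- A real polynomial P with at most k nonzero coefficients (k ≥ 1) has at most 2k distinct real roots, counting 0 if it is a root. -/

import Mathlib

/-!
By Descartes' rule of signs the number of positive roots of `P` is at most the number of sign
changes in its coefficient sequence, hence less than the number `#P.support` of nonzero
coefficients. The negative roots of `P` are the positive roots of `P(-X)`, which has the same
number of nonzero coefficients. Together with the possible root `0` this gives at most
`2 * #P.support - 1` distinct roots.
-/

open Polynomial Finset

theorem Multiset.card_toFinset_le_countP_pos_add_countP_neg_add_one {α : Type*} [LinearOrder α]
    [Zero α] (s : Multiset α) : #s.toFinset ≤ s.countP (0 < ·) + s.countP (· < 0) + 1 := by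
  classical
  have hsub : s.toFinset ⊆
      insert 0 ((s.filter (0 < ·)).toFinset ∪ (s.filter (· < 0)).toFinset) := by
    intro x hx
    rcases lt_trichotomy x 0 with h | h | h <;> simp_all
  calc #s.toFinset ≤ _ := Finset.card_le_card hsub
    _ ≤ _ := card_insert_le _ _
    _ ≤ #(s.filter (0 < ·)).toFinset + #(s.filter (· < 0)).toFinset + 1 := by
      grw [card_union_le]
    _ ≤ _ := by
      grw [Multiset.toFinset_card_le, Multiset.toFinset_card_le,
        Multiset.countP_eq_card_filter, Multiset.countP_eq_card_filter]

namespace Polynomial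

theorem signVariations_lt_card_support {R : Type*} [Semiring R] [LinearOrder R] {P : R[X]}
    (hP : P ≠ 0) : P.signVariations < #P.support := by
  induction h : #P.support generalizing P with
  | zero => simp_all
  | succ n ih =>
    by_cases hE : P.eraseLead = 0
    · rw [← P.eraseLead_add_monomial_natDegree_leadingCoeff, hE, zero_add,
        signVariations_monomial]
      omega
    · have hErase := ih hE (by rw [card_support_eraseLead, h]; rfl)
      have hStep := signVariations_le_eraseLead_succ P
      omega

section StrictOrderedCommRing

variable {R : Type*} [CommRing R] [LinearOrder R] [IsStrictOrderedRing R]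

theorem countP_pos_roots_lt_card_support {P : R[X]} (hP : P ≠ 0) :
    P.roots.countP (0 < ·) < #P.support :=
  (roots_countP_pos_le_signVariations P).trans_lt (signVariations_lt_card_support hP)

theorem card_support_comp_neg_X (P : R[X]) : #(P.comp (-X)).support = #P.support := by
  have hX : (-X : R[X]) = C (-1) * X := by simp
  congr 1
  ext n
  rw [mem_support_iff, mem_support_iff, hX, comp_C_mul_X_coeff]
  simp

theorem countP_neg_roots_lt_card_support {P : R[X]} (hP : P ≠ 0) :
    P.roots.countP (· < 0) < #P.support := by
  have hP' : P.comp (-X) ≠ 0 := fun h => hP (by simpa using congr_arg (·.comp (-X)) h)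
  have hpos := countP_pos_roots_lt_card_support hP'
  rw [roots_comp_neg_X, Multiset.countP_map, card_support_comp_neg_X] at hpos
  simpa [Multiset.countP_eq_card_filter] using hpos

theorem card_roots_toFinset_lt_two_mul_card_support {P : R[X]} (hP : P ≠ 0) :
    #P.roots.toFinset < 2 * #P.support := by
  have hsplit := P.roots.card_toFinset_le_countP_pos_add_countP_neg_add_one
  have hpos := countP_pos_roots_lt_card_support hP
  have hneg := countP_neg_roots_lt_card_support hP
  omega

end StrictOrderedCommRing
end Polynomial

theorem stmt5_general (k : ℕ) (P : Polynomial ℝ) (hP : P ≠ 0)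
    (hsparse : P.support.card ≤ k) :
    {x : ℝ | Polynomial.eval x P = 0}.Finite ∧
      {x : ℝ | Polynomial.eval x P = 0}.ncard ≤ 2 * k := by
  have hroots : {x : ℝ | P.eval x = 0} = P.roots.toFinset := by
    ext x
    simp [mem_roots hP]
  rw [hroots, Set.ncard_coe_finset]
  have hcard := card_roots_toFinset_lt_two_mul_card_support hP
  exact ⟨P.roots.toFinset.finite_toSet, by omega⟩

/-- A nonzero real polynomial with at most `k` nonzero coefficients has at most `2k`
distinct real roots. -/
theorem stmt5 (k : ℕ) (hk : 1 ≤ k) (P : Polynomial ℝ) (hP : P ≠ 0)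
    (hsparse : P.support.card ≤ k) :
    {x : ℝ | Polynomial.eval x P = 0}.Finite ∧
      {x : ℝ | Polynomial.eval x P = 0}.ncard ≤ 2 * k :=
  stmt5_general k P hP hsparse
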